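/- Let G⁰ be a connected groupoid with distinguished object *, with G⁰_* = Mor(*,*) a subgroup of a group G. Define new morphism sets Mor_new(a,b) = (Mor(*,b) × G × Mor(a,*))/∼ where (f,g,h) ∼ (f',g',h') iff (f'⁻¹f)g = g'(h'h⁻¹), with composition [(j',g',f')] ∘ [(f,g,h)] = [(j', g'·(f'∘f)·g, h)]. Then this composition is well-defined on equivalence classes, is associative, has identities, and every morphism has a two-sided inverse; i.e., it yields a groupoid extending G⁰ with the same objects and with Mor_new(*,*) ≅ G. -/
import Mathlib


open CategoryTheory

/-- The relation `(f,g,h) ∼ (f',g',h') ↔ (f'⁻¹∘f)·g = g'·(h'∘h⁻¹)` on triples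
`Mor(*,b) × G × Mor(a,*)`, used to extend a groupoid along a supergroup `G` of `Mor(*,*)`. -/
def tripleRel {C : Type*} [Groupoid C] (star : C) {G : Type*} [Group G]
    (φ : End star →* G) (a b : C)
    (x y : (star ⟶ b) × G × (a ⟶ star)) : Prop :=
  φ (x.1 ≫ Groupoid.inv y.1) * x.2.1 = y.2.1 * φ (Groupoid.inv x.2.2 ≫ y.2.2)

/-- Extension of a connected groupoid `G⁰` along a supergroup `G ≥ Mor(*,*)`:
the morphism sets `Mor_new(a,b) = (Mor(*,b) × G × Mor(a,*))/∼`, with composition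
`[(j',g',f')] ∘ [(f,g,h)] = [(j', g'·(f'∘f)·g, h)]`, form a groupoid with the same objects,
extending `G⁰` and with `Mor_new(*,*) ≅ G`. -/
theorem stmt6 {C : Type*} [Groupoid C] (star : C) {G : Type*} [Group G]
    (φ : End star →* G) (hφ : Function.Injective φ)
    (hconn : ∀ a b : C, Nonempty (a ⟶ b)) :
    ∃ comp : ∀ a b c : C, Quot (tripleRel star φ a b) → Quot (tripleRel star φ b c) →
        Quot (tripleRel star φ a c),
      -- composition is well defined on classes and given by the stated formula
      (∀ (a b c : C) (f : star ⟶ b) (g : G) (h : a ⟶ star)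
          (j' : star ⟶ c) (g' : G) (f' : b ⟶ star),
        comp a b c (Quot.mk _ (f, g, h)) (Quot.mk _ (j', g', f'))
          = Quot.mk _ (j', g' * φ (f ≫ f') * g, h)) ∧
      -- associativity
      (∀ (a b c d : C) (x : Quot (tripleRel star φ a b)) (y : Quot (tripleRel star φ b c))
          (z : Quot (tripleRel star φ c d)),
        comp a c d (comp a b c x y) z = comp a b d x (comp b c d y z)) ∧
      ∃ ids : ∀ a : C, Quot (tripleRel star φ a a),
        -- identities
        (∀ a : C, ∃ h : a ⟶ star, ids a = Quot.mk _ (Groupoid.inv h, (1 : G), h)) ∧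
        (∀ (a b : C) (x : Quot (tripleRel star φ a b)),
          comp a a b (ids a) x = x ∧ comp a b b x (ids b) = x) ∧
        -- inverses
        (∀ (a b : C) (x : Quot (tripleRel star φ a b)), ∃ y : Quot (tripleRel star φ b a),
          comp a b a x y = ids a ∧ comp b a b y x = ids b) ∧
        -- the new automorphism group at * is (anti)isomorphic to G
        (∃ e : Quot (tripleRel star φ star star) → G, Function.Bijective e ∧
          (∀ (f : star ⟶ star) (g : G) (h : star ⟶ star),
            e (Quot.mk _ (f, g, h)) = φ f * g * φ h) ∧
          (∀ x y, e (comp star star star x y) = e y * e x)) ∧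
        -- the new groupoid extends G⁰
        (∃ j : ∀ a b : C, (a ⟶ b) → Quot (tripleRel star φ a b),
          (∀ a b : C, Function.Injective (j a b)) ∧
          (∀ a : C, j a a (𝟙 a) = ids a) ∧
          (∀ (a b c : C) (m : a ⟶ b) (m' : b ⟶ c),
            comp a b c (j a b m) (j b c m') = j a c (m ≫ m'))) := by
  classical
  have hmul : ∀ p q : star ⟶ star, φ (p ≫ q) = φ q * φ p := fun p q => φ.map_mul q p
  have hone : φ (𝟙 star) = 1 := φ.map_one
  have hinv : ∀ p : star ⟶ star, φ (Groupoid.inv p) = (φ p)⁻¹ := by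
    intro p
    have h : Groupoid.inv p = (p : End star)⁻¹ := rfl
    rw [h, map_inv]
  -- chosen morphism to the basepoint
  have ch : ∀ a : C, a ⟶ star := fun a => Classical.choice (hconn a star)
  -- the composition on representatives
  have hR : ∀ (a b c : C) (x : (star ⟶ b) × G × (a ⟶ star))
      (y₁ y₂ : (star ⟶ c) × G × (b ⟶ star)), tripleRel star φ b c y₁ y₂ →
      tripleRel star φ a c (y₁.1, y₁.2.1 * φ (x.1 ≫ y₁.2.2) * x.2.1, x.2.2)
        (y₂.1, y₂.2.1 * φ (x.1 ≫ y₂.2.2) * x.2.1, x.2.2) := by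
    rintro a b c ⟨f, g, h⟩ ⟨f₁, g₁, h₁⟩ ⟨f₂, g₂, h₂⟩ hy
    unfold tripleRel at hy ⊢
    simp only at hy ⊢
    rw [Groupoid.inv_comp, hone, mul_one]
    have key : φ (Groupoid.inv h₁ ≫ h₂) * φ (f ≫ h₁) = φ (f ≫ h₂) := by
      rw [← hmul]; congr 1; simp
    calc φ (f₁ ≫ Groupoid.inv f₂) * (g₁ * φ (f ≫ h₁) * g)
        = (φ (f₁ ≫ Groupoid.inv f₂) * g₁) * φ (f ≫ h₁) * g := by group
      _ = (g₂ * φ (Groupoid.inv h₁ ≫ h₂)) * φ (f ≫ h₁) * g := by rw [hy]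
      _ = g₂ * (φ (Groupoid.inv h₁ ≫ h₂) * φ (f ≫ h₁)) * g := by group
      _ = g₂ * φ (f ≫ h₂) * g := by rw [key]
  have hL : ∀ (a b c : C) (x₁ x₂ : (star ⟶ b) × G × (a ⟶ star))
      (y : (star ⟶ c) × G × (b ⟶ star)), tripleRel star φ a b x₁ x₂ →
      tripleRel star φ a c (y.1, y.2.1 * φ (x₁.1 ≫ y.2.2) * x₁.2.1, x₁.2.2)
        (y.1, y.2.1 * φ (x₂.1 ≫ y.2.2) * x₂.2.1, x₂.2.2) := by
    rintro a b c ⟨f₁, g₁, h₁⟩ ⟨f₂, g₂, h₂⟩ ⟨f, g, h⟩ hx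
    unfold tripleRel at hx ⊢
    simp only at hx ⊢
    rw [Groupoid.comp_inv, hone, one_mul]
    have key : φ (f₂ ≫ h) * φ (f₁ ≫ Groupoid.inv f₂) = φ (f₁ ≫ h) := by
      rw [← hmul]; congr 1; simp
    calc g * φ (f₁ ≫ h) * g₁
        = g * (φ (f₂ ≫ h) * (φ (f₁ ≫ Groupoid.inv f₂) * g₁)) := by rw [← key]; group
      _ = g * (φ (f₂ ≫ h) * (g₂ * φ (Groupoid.inv h₁ ≫ h₂))) := by rw [hx]
      _ = g * φ (f₂ ≫ h) * g₂ * φ (Groupoid.inv h₁ ≫ h₂) := by group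
  refine ⟨fun a b c => Quot.lift₂
      (fun x y => Quot.mk _ (y.1, y.2.1 * φ (x.1 ≫ y.2.2) * x.2.1, x.2.2))
      (fun x y₁ y₂ hy => Quot.sound (hR a b c x y₁ y₂ hy))
      (fun x₁ x₂ y hx => Quot.sound (hL a b c x₁ x₂ y hx)),
    fun a b c f g h j' g' f' => rfl, ?_, ?_⟩
  · -- associativity
    intro a b c d x y z
    induction x using Quot.ind with | _ x =>
    induction y using Quot.ind with | _ y =>
    induction z using Quot.ind with | _ z =>
    apply congrArg (Quot.mk _)
    simp [mul_assoc]
  · refine ⟨fun a => Quot.mk _ (Groupoid.inv (ch a), (1 : G), ch a),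
      fun a => ⟨ch a, rfl⟩, ?_, ?_, ?_, ?_⟩
    · -- identities
      intro a b x
      induction x using Quot.ind with | _ x =>
      obtain ⟨f, g, h⟩ := x
      constructor
      · apply Quot.sound
        unfold tripleRel
        simp only
        rw [Groupoid.comp_inv, hone, one_mul, mul_one]
      · apply Quot.sound
        unfold tripleRel
        simp only
        rw [Groupoid.inv_comp, hone, mul_one, one_mul]
        rw [← mul_assoc, ← hmul]
        have : (f ≫ ch b) ≫ Groupoid.inv (ch b) ≫ Groupoid.inv f = 𝟙 star := by simp
        rw [this, hone, one_mul]
    · -- inverses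
      intro a b x
      induction x using Quot.ind with | _ x =>
      obtain ⟨f, g, h⟩ := x
      refine ⟨Quot.mk _ (Groupoid.inv h, g⁻¹, Groupoid.inv f), ?_, ?_⟩
      · have e1 : g⁻¹ * φ (f ≫ Groupoid.inv f) * g = 1 := by
          rw [Groupoid.comp_inv, hone]; group
        show Quot.mk _ (Groupoid.inv h, g⁻¹ * φ (f ≫ Groupoid.inv f) * g, h) = _
        rw [e1]
        apply Quot.sound
        unfold tripleRel
        simp only
        rw [mul_one, one_mul]
        congr 1
        simp
      · have e1 : g * φ (Groupoid.inv h ≫ h) * g⁻¹ = 1 := by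
          rw [Groupoid.inv_comp, hone]; group
        show Quot.mk _ (f, g * φ (Groupoid.inv h ≫ h) * g⁻¹, Groupoid.inv f) = _
        rw [e1]
        apply Quot.sound
        unfold tripleRel
        simp only
        rw [mul_one, one_mul]
        congr 1
        simp
    · -- the automorphism group at *
      have ewd : ∀ x y : (star ⟶ star) × G × (star ⟶ star), tripleRel star φ star star x y →
          φ x.1 * x.2.1 * φ x.2.2 = φ y.1 * y.2.1 * φ y.2.2 := by
        rintro ⟨f₁, g₁, h₁⟩ ⟨f₂, g₂, h₂⟩ hx
        unfold tripleRel at hx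
        simp only at hx ⊢
        rw [hmul, hinv, hmul, hinv] at hx
        have : g₁ = (φ f₁)⁻¹ * (φ f₂ * (g₂ * (φ h₂ * (φ h₁)⁻¹))) := by
          rw [← hx]; group
        rw [this]; group
      refine ⟨Quot.lift (fun x => φ x.1 * x.2.1 * φ x.2.2) ewd, ⟨?_, ?_⟩, fun f g h => rfl, ?_⟩
      · -- injective
        intro x y hxy
        induction x using Quot.ind with | _ x =>
        induction y using Quot.ind with | _ y =>
        obtain ⟨f₁, g₁, h₁⟩ := x
        obtain ⟨f₂, g₂, h₂⟩ := y
        simp only at hxy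
        apply Quot.sound
        unfold tripleRel
        simp only
        rw [hmul, hinv, hmul, hinv]
        have : g₁ = (φ f₁)⁻¹ * (φ f₂ * g₂ * φ h₂ * (φ h₁)⁻¹) := by
          rw [← hxy]; group
        rw [this]; group
      · -- surjective
        intro g
        exact ⟨Quot.mk _ (𝟙 star, g, 𝟙 star), by simp only [Quot.lift, hone]; group⟩
      · -- antihomomorphism
        intro x y
        induction x using Quot.ind with | _ x =>
        induction y using Quot.ind with | _ y =>
        obtain ⟨f₁, g₁, h₁⟩ := x
        obtain ⟨f₂, g₂, h₂⟩ := y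
        show φ f₂ * (g₂ * φ (f₁ ≫ h₂) * g₁) * φ h₁ = (φ f₂ * g₂ * φ h₂) * (φ f₁ * g₁ * φ h₁)
        rw [hmul]; group
    · -- the embedding of the original groupoid
      have Ewd : ∀ (a b : C) (x y : (star ⟶ b) × G × (a ⟶ star)), tripleRel star φ a b x y →
          φ (x.1 ≫ ch b) * x.2.1 * φ (Groupoid.inv (ch a) ≫ x.2.2)
            = φ (y.1 ≫ ch b) * y.2.1 * φ (Groupoid.inv (ch a) ≫ y.2.2) := by
        rintro a b ⟨f₁, g₁, h₁⟩ ⟨f₂, g₂, h₂⟩ hx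
        unfold tripleRel at hx
        simp only at hx ⊢
        have key1 : φ (f₁ ≫ ch b) * φ (f₂ ≫ Groupoid.inv f₁) = φ (f₂ ≫ ch b) := by
          rw [← hmul]; congr 1; simp
        have key2 : φ (Groupoid.inv h₁ ≫ h₂) * φ (Groupoid.inv (ch a) ≫ h₁)
            = φ (Groupoid.inv (ch a) ≫ h₂) := by
          rw [← hmul]; congr 1; simp
        have key0 : φ (f₂ ≫ Groupoid.inv f₁) = (φ (f₁ ≫ Groupoid.inv f₂))⁻¹ := by
          rw [← hinv]; congr 1; simp
        have hg : g₁ = φ (f₂ ≫ Groupoid.inv f₁) * g₂ * φ (Groupoid.inv h₁ ≫ h₂) := by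
          rw [key0, mul_assoc, ← hx]; group
        rw [hg, ← key1, ← key2]; group
      refine ⟨fun a b m => Quot.mk _ (Groupoid.inv (ch a) ≫ m, (1 : G), ch a), ?_, ?_, ?_⟩
      · -- injective
        intro a b m m' hm
        have h2 := congrArg (Quot.lift
          (fun x : (star ⟶ b) × G × (a ⟶ star) =>
            φ (x.1 ≫ ch b) * x.2.1 * φ (Groupoid.inv (ch a) ≫ x.2.2)) (Ewd a b)) hm
        simp only [Quot.lift] at h2
        rw [mul_one, mul_one, Groupoid.inv_comp, hone, mul_one, mul_one] at h2
        have h3 := hφ h2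
        have h4 := congrArg (fun t : star ⟶ star => ch a ≫ t ≫ Groupoid.inv (ch b)) h3
        simpa using h4
      · -- identities
        intro a
        apply congrArg (Quot.mk _)
        simp
      · -- functoriality
        intro a b c m m'
        apply Quot.sound
        unfold tripleRel
        simp only
        rw [Groupoid.inv_comp, hone, one_mul, one_mul, mul_one, ← hmul]
        have : ((Groupoid.inv (ch a) ≫ m) ≫ ch b) ≫
            (Groupoid.inv (ch b) ≫ m') ≫ Groupoid.inv (Groupoid.inv (ch a) ≫ m ≫ m')
            = 𝟙 star := by simp
        rw [this, hone]
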